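/- Let Ĥ be a real symmetric matrix with ground state |ξ⟩ (eigenvector with minimum eigenvalue λ₀) having amplitudes α(x) = ⟨x|ξ⟩. Define the fixed-node matrix F by: F_{xy} = Ĥ_{xy} if x ≠ y and α(x)Ĥ_{xy}α(y) ≤ 0; F_{xy} = 0 if x ≠ y and α(x)Ĥ_{xy}α(y) > 0; and F_{xx} = Ĥ_{xx} + Σ_{y: α(x)Ĥ_{xy}α(y) > 0} (α(y)/α(x))·Ĥ_{xy} (assuming α(x) ≠ 0 for all x in the support relevant to these sums). Then F|ξ⟩ = Ĥ|ξ⟩ = λ₀|ξ⟩, so |ξ⟩ is an eigenvector of F with eigenvalue λ₀. -/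
import Mathlib


open Finset in
/-- The fixed-node matrix `F = F(ξ, H)` of a real matrix `H` with respect to a
vector `ξ` with amplitudes `α(x) = ξ x`: off-diagonal entries with
`α(x)·H_{xy}·α(y) > 0` are set to zero, the remaining off-diagonal entries are
kept, and the diagonal is `H_{xx} + Σ_{y : α(x)H_{xy}α(y)>0} (α(y)/α(x))·H_{xy}`. -/
noncomputable def fixedNode {N : ℕ} (H : Matrix (Fin N) (Fin N) ℝ)
    (ξ : Fin N → ℝ) : Matrix (Fin N) (Fin N) ℝ := fun x y =>
  if x = y then
    H x x + ∑ z ∈ univ.filter (fun z => z ≠ x ∧ 0 < ξ x * H x z * ξ z),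
      (ξ z / ξ x) * H x z
  else if 0 < ξ x * H x y * ξ y then 0 else H x y

open Finset in
/-- If `ξ` is a ground state (eigenvector of minimal eigenvalue `λ₀`, with all
amplitudes nonzero) of the real symmetric matrix `Ĥ`, then `F·ξ = Ĥ·ξ = λ₀·ξ`,
i.e. `ξ` is an eigenvector of the fixed-node matrix `F` with eigenvalue `λ₀`. -/
theorem stmt_17 {N : ℕ} (H : Matrix (Fin N) (Fin N) ℝ) (hsymm : H.IsSymm)
    (ξ : Fin N → ℝ) (hξ : ∀ x, ξ x ≠ 0) (lam0 : ℝ)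
    (heig : H.mulVec ξ = lam0 • ξ)
    (hmin : ∀ μ ∈ spectrum ℝ H, lam0 ≤ μ) :
    (fixedNode H ξ).mulVec ξ = H.mulVec ξ ∧
    (fixedNode H ξ).mulVec ξ = lam0 • ξ := by
  have key : (fixedNode H ξ).mulVec ξ = H.mulVec ξ := by
    funext x
    simp only [Matrix.mulVec, dotProduct]
    rw [← Finset.add_sum_erase _ _ (mem_univ x), ← Finset.add_sum_erase _ (fun y => H x y * ξ y) (mem_univ x)]
    have h1 : ∀ y ∈ univ.erase x, fixedNode H ξ x y * ξ y =
        (if 0 < ξ x * H x y * ξ y then 0 else H x y) * ξ y := by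
      intro y hy
      have hyx : y ≠ x := (mem_erase.mp hy).1
      simp [fixedNode, (Ne.symm hyx)]
    rw [Finset.sum_congr rfl h1]
    have hsplit := Finset.sum_filter_add_sum_filter_not (univ.erase x)
      (fun y => 0 < ξ x * H x y * ξ y) (fun y => H x y * ξ y)
    have h2 : ∑ y ∈ univ.erase x, (if 0 < ξ x * H x y * ξ y then 0 else H x y) * ξ y
        = ∑ y ∈ (univ.erase x).filter (fun y => ¬ 0 < ξ x * H x y * ξ y), H x y * ξ y := by
      rw [← Finset.sum_filter_add_sum_filter_not (univ.erase x) (fun y => 0 < ξ x * H x y * ξ y)]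
      have hz : ∑ y ∈ (univ.erase x).filter (fun y => 0 < ξ x * H x y * ξ y),
          (if 0 < ξ x * H x y * ξ y then 0 else H x y) * ξ y = 0 :=
        Finset.sum_eq_zero fun y hy => by simp [(mem_filter.mp hy).2]
      rw [hz, zero_add]
      exact Finset.sum_congr rfl fun y hy => by rw [if_neg (mem_filter.mp hy).2]
    have hset : univ.filter (fun z => z ≠ x ∧ 0 < ξ x * H x z * ξ z)
        = (univ.erase x).filter (fun y => 0 < ξ x * H x y * ξ y) := by
      ext z; simp [and_comm, Finset.mem_erase]
    have h3 : fixedNode H ξ x x = H x x + ∑ z ∈ (univ.erase x).filter (fun y => 0 < ξ x * H x y * ξ y), (ξ z / ξ x) * H x z := by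
      simp [fixedNode, hset]
    rw [h3, h2, add_mul, add_assoc]
    congr 1
    rw [Finset.sum_mul, ← hsplit]
    congr 1
    refine Finset.sum_congr rfl fun z hz => ?_
    rw [mul_right_comm, div_mul_cancel₀ _ (hξ x), mul_comm]
  exact ⟨key, key.trans heig⟩
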